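/- Let A be a self-adjoint symmetric (A = Aᵀ) d×d matrix with traceless part A₀ = A − (Tr[A]/d)𝟙, and let ρ be any density matrix. Define V_U = ((d+1)/(d+2))·(Tr[A₀²] + 2Tr[ρA₀²]) − Tr[ρA₀]² and V_R = ((d+2)/(2d+8))·(Tr[A₀²] + 4Tr[ρA₀²]) − Tr[ρA₀]². Then V_U − V_R = ((d+1)/(d+2) − (d+2)/(2d+8))·Tr[A₀²] + (2(d+1)/(d+2) − 4(d+2)/(2d+8))·Tr[ρA₀²] ≥ 0 for all d ≥ 2; in particular V_R ≤ V_U. -/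

import Mathlib

/-! The difference `V_U - V_R` is a combination of `Tr[A₀²]` and `Tr[ρA₀²]` whose coefficients are
nonnegative for every `d ≥ 0`; both traces are nonnegative because `A₀` is Hermitian, so
`Tr[ρA₀²] = Tr[A₀ᴴρA₀]` is the trace of a positive semidefinite matrix. -/

open Matrix ComplexOrder

namespace Matrix

variable {n m R : Type*} [Fintype n] [Fintype m]

lemma IsHermitian.isSelfAdjoint_trace [AddCommMonoid R] [StarAddMonoid R] {A : Matrix n n R}
    (hA : A.IsHermitian) : IsSelfAdjoint A.trace := by
  rw [IsSelfAdjoint, ← trace_conjTranspose, hA.eq]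

lemma IsHermitian.sub_trace_div_smul_one [DecidableEq n] [Field R] [StarRing R] {A : Matrix n n R}
    (hA : A.IsHermitian) (k : ℕ) : (A - (A.trace / k) • (1 : Matrix n n R)).IsHermitian :=
  hA.sub (isHermitian_one.smul (hA.isSelfAdjoint_trace.div (.natCast k)))

lemma PosSemidef.trace_mul_self_mul_conjTranspose_nonneg [CommRing R] [PartialOrder R] [StarRing R]
    [StarOrderedRing R] {ρ : Matrix n n R} (hρ : ρ.PosSemidef) (B : Matrix n m R) :
    0 ≤ (ρ * (B * Bᴴ)).trace := by
  rw [← Matrix.mul_assoc, trace_mul_comm, ← Matrix.mul_assoc]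
  exact (hρ.conjTranspose_mul_mul_same B).trace_nonneg

end Matrix

lemma add_two_div_le_add_one_div {x : ℝ} (hx : 0 ≤ x) :
    (x + 2) / (2 * x + 8) ≤ (x + 1) / (x + 2) := by
  rw [div_le_div_iff₀ (by positivity) (by positivity)]
  nlinarith

lemma four_mul_add_two_div_le {x : ℝ} (hx : 0 ≤ x) :
    4 * (x + 2) / (2 * x + 8) ≤ 2 * (x + 1) / (x + 2) := by
  rw [div_le_div_iff₀ (by positivity) (by positivity)]
  nlinarith

theorem real_variance_le_unitary_variance_general (d : ℕ)
    (A ρ : Matrix (Fin d) (Fin d) ℂ)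
    (hA : A.IsHermitian)
    (hρ : ρ.PosSemidef) :
    let A0 : Matrix (Fin d) (Fin d) ℂ := A - (A.trace / d) • (1 : Matrix (Fin d) (Fin d) ℂ)
    let t1 : ℝ := ((A0 * A0).trace).re
    let t2 : ℝ := ((ρ * (A0 * A0)).trace).re
    let t3 : ℝ := ((ρ * A0).trace).re
    let VU : ℝ := ((d + 1) / (d + 2)) * (t1 + 2 * t2) - t3 ^ 2
    let VR : ℝ := ((d + 2) / (2 * d + 8)) * (t1 + 4 * t2) - t3 ^ 2
    VU - VR = ((d + 1) / (d + 2) - (d + 2) / (2 * d + 8)) * t1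
        + (2 * (d + 1) / (d + 2) - 4 * (d + 2) / (2 * d + 8)) * t2 ∧
      0 ≤ VU - VR ∧ VR ≤ VU := by
  intro A0 t1 t2 t3 VU VR
  have hA0 : A0ᴴ = A0 := (hA.sub_trace_div_smul_one d).eq
  have ht1 : 0 ≤ t1 := by
    have h := (posSemidef_self_mul_conjTranspose A0).trace_nonneg
    rw [hA0] at h
    exact (Complex.nonneg_iff.mp h).1
  have ht2 : 0 ≤ t2 := by
    have h := hρ.trace_mul_self_mul_conjTranspose_nonneg A0
    rw [hA0] at h
    exact (Complex.nonneg_iff.mp h).1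
  have hdiff : VU - VR = ((d + 1) / (d + 2) - (d + 2) / (2 * d + 8)) * t1
      + (2 * (d + 1) / (d + 2) - 4 * (d + 2) / (2 * d + 8)) * t2 := by
    simp only [VU, VR]
    ring
  have hd : (0 : ℝ) ≤ d := d.cast_nonneg
  have hnonneg : 0 ≤ VU - VR := by
    rw [hdiff]
    have h1 := sub_nonneg.mpr (add_two_div_le_add_one_div hd)
    have h2 := sub_nonneg.mpr (four_mul_add_two_div_le hd)
    positivity
  exact ⟨hdiff, hnonneg, sub_nonneg.mp hnonneg⟩

theorem real_variance_le_unitary_variance (d : ℕ) (hd : 2 ≤ d)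
    (A ρ : Matrix (Fin d) (Fin d) ℂ)
    (hA : A.IsHermitian) (hAsym : A = Aᵀ)
    (hρ : ρ.PosSemidef) (hρ1 : ρ.trace = 1) :
    let A0 : Matrix (Fin d) (Fin d) ℂ := A - (A.trace / d) • (1 : Matrix (Fin d) (Fin d) ℂ)
    let t1 : ℝ := ((A0 * A0).trace).re
    let t2 : ℝ := ((ρ * (A0 * A0)).trace).re
    let t3 : ℝ := ((ρ * A0).trace).re
    let VU : ℝ := ((d + 1) / (d + 2)) * (t1 + 2 * t2) - t3 ^ 2
    let VR : ℝ := ((d + 2) / (2 * d + 8)) * (t1 + 4 * t2) - t3 ^ 2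
    VU - VR = ((d + 1) / (d + 2) - (d + 2) / (2 * d + 8)) * t1
        + (2 * (d + 1) / (d + 2) - 4 * (d + 2) / (2 * d + 8)) * t2 ∧
      0 ≤ VU - VR ∧ VR ≤ VU :=
  real_variance_le_unitary_variance_general d A ρ hA hρ
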